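/- In a rooted tree whose leaves are all contained in P, for two nodes m, m' ∈ P sharing the same k-depth ancestor (α_m^k = α_{m'}^k) and having depth at least k+1, the (k+1)-depth ancestors coincide, α_m^{k+1} = α_{m'}^{k+1}, if and only if the metered level sets coincide: M_m^k = M_{m'}^k, where M_x^k := N_x^k ∩ P. -/
import Mathlib


/-- A finite rooted tree, encoded by a parent function together with a
consistent depth function (root at depth `0`). -/
structure FinRootedTree (V : Type*) [Fintype V] [DecidableEq V] where
  root : V
  parent : V → V
  depth : V → ℕ
  depth_root : depth root = 0
  parent_root : parent root = root
  depth_parent : ∀ v, v ≠ root → depth (parent v) + 1 = depth v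
  eq_root_of_depth_eq_zero : ∀ v, depth v = 0 → v = root

namespace FinRootedTree

variable {V : Type*} [Fintype V] [DecidableEq V]

/-- The ancestor `α_m^k` of `m` at depth `k` (meaningful for `k ≤ depth m`). -/
def anc (G : FinRootedTree V) (m : V) (k : ℕ) : V := G.parent^[G.depth m - k] m

/-- `a` is an ancestor of `m` (with `m` an ancestor of itself). -/
def IsAncestor (G : FinRootedTree V) (a m : V) : Prop :=
  ∃ k, k ≤ G.depth m ∧ G.anc m k = a

/-- The set `D_n` of descendants of `n`, including `n` itself. -/
def desc (G : FinRootedTree V) (n : V) : Set V := {s | G.IsAncestor n s}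

/-- The `k`-th level set `N_m^k` of node `m` (for `k ≤ depth m`). -/
def levelSet (G : FinRootedTree V) (m : V) (k : ℕ) : Set V :=
  if k < G.depth m then G.desc (G.anc m k) \ G.desc (G.anc m (k + 1)) else G.desc m

/-- A leaf node: no descendants besides itself. -/
def IsLeaf (G : FinRootedTree V) (m : V) : Prop := G.desc m = {m}

/-- `R_{m,n}`: the sum of the weights of all edges both of whose endpoints are
common ancestors of `m` and `n`.  The edge joining `v ≠ root` to its parent is
recorded by its lower endpoint `v` with weight `w v`. -/
noncomputable def Rres (G : FinRootedTree V) (w : V → ℝ) (m n : V) : ℝ :=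
  ∑ᶠ v ∈ {v | v ≠ G.root ∧ G.IsAncestor v m ∧ G.IsAncestor v n}, w v


end FinRootedTree


namespace FinRootedTree

lemma depth_iterate_parent {V : Type*} [Fintype V] [DecidableEq V] (G : FinRootedTree V)
    (m : V) : ∀ i, i ≤ G.depth m → G.depth (G.parent^[i] m) = G.depth m - i := by
  intro i
  induction i with
  | zero => simp
  | succ n ih =>
    intro h
    rw [Function.iterate_succ_apply']
    have hn : n ≤ G.depth m := Nat.le_of_succ_le h
    have hd := ih hn
    have hne : G.parent^[n] m ≠ G.root := by
      intro hr
      have h0 : G.depth (G.parent^[n] m) = 0 := by rw [hr, G.depth_root]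
      omega
    have := G.depth_parent _ hne
    omega

lemma depth_anc {V : Type*} [Fintype V] [DecidableEq V] (G : FinRootedTree V)
    (m : V) (j : ℕ) (hj : j ≤ G.depth m) : G.depth (G.anc m j) = j := by
  unfold FinRootedTree.anc
  rw [G.depth_iterate_parent m _ (Nat.sub_le _ _)]
  omega

lemma anc_unique {V : Type*} [Fintype V] [DecidableEq V] (G : FinRootedTree V)
    {a a' x : V} (h : G.IsAncestor a x) (h' : G.IsAncestor a' x)
    (hd : G.depth a = G.depth a') : a = a' := by
  obtain ⟨j, hj, rfl⟩ := h
  obtain ⟨j', hj', rfl⟩ := h'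
  have h1 := G.depth_anc x j hj
  have h2 := G.depth_anc x j' hj'
  have : j = j' := by omega
  rw [this]

end FinRootedTree

theorem anc_succ_eq_iff_metered_levelSet_eq {V : Type*} [Fintype V] [DecidableEq V]
    (G : FinRootedTree V) (P : Set V) (hP : {v | G.IsLeaf v} ⊆ P)
    (m m' : V) (hmP : m ∈ P) (hm'P : m' ∈ P) (k : ℕ)
    (hanc : G.anc m k = G.anc m' k)
    (hm : k + 1 ≤ G.depth m) (hm' : k + 1 ≤ G.depth m') :
    G.anc m (k + 1) = G.anc m' (k + 1) ↔
      G.levelSet m k ∩ P = G.levelSet m' k ∩ P := by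
  have hkm : k < G.depth m := hm
  have hkm' : k < G.depth m' := hm'
  constructor
  · intro h
    unfold FinRootedTree.levelSet
    rw [if_pos hkm, if_pos hkm', hanc, h]
  · intro h
    by_contra hne
    have hmem : m ∈ G.levelSet m' k ∩ P := by
      refine ⟨?_, hmP⟩
      unfold FinRootedTree.levelSet
      rw [if_pos hkm']
      refine ⟨?_, ?_⟩
      · rw [← hanc]; exact ⟨k, le_of_lt hkm, rfl⟩
      · intro hmem'
        exact hne (G.anc_unique ⟨k+1, hm, rfl⟩ hmem'
          (by rw [G.depth_anc m _ hm, G.depth_anc m' _ hm']))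
    rw [← h] at hmem
    obtain ⟨hlev, -⟩ := hmem
    unfold FinRootedTree.levelSet at hlev
    rw [if_pos hkm] at hlev
    exact hlev.2 ⟨k+1, hm, rfl⟩
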